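/- arXiv:1506.06191 — 2 statements merged into one kernel-verified Lean document; each statement's English description precedes it below -/
import Mathlib

section
/- Let R be a commutative Noetherian integrally closed domain, F a finitely generated torsion-free R-module, and F' ⊆ F a reflexive submodule. Then either the quotient F/F' is torsion-free, or every associated prime of the torsion submodule of F/F' has height 1. -/
/-!
Write `p = ann(x̄)` with `x̄ = x + F'` torsion, and pick `0 ≠ s ∈ p`, so that `p` has height
`≥ 1`. If `p` had height at least two, then for every `f : F' → R` we would get `s ∣ f (s x)`:
indeed `s * f (r x) = r * f (s x)` for all `r ∈ p`, and in a Noetherian normal domain `d ∣ r * b`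
for all `r` in an ideal of height `≥ 2` forces `d ∣ b`, since the associated primes of `R ⧸ (d)`
have height one. So `f ↦ f (s x) / s` lies in `F'** = F'`, which gives `y ∈ F'` with `s y = s x`,
and `x = y ∈ F'` as `F` is torsion free, contradicting `x̄ ≠ 0`.

That `q = ann(b̄) ∈ Ass(R ⧸ (d))` has height one is the classical dichotomy: either `b / d`
stabilises `q`, hence is integral over `R` and lies in `R`, which is absurd; or `b / d` sends some
`r ∈ q` to an element `w ∉ q`, and then `w q ⊆ (r)`, so `q` is minimal over `(r)` and Krull's
principal ideal theorem applies.
-/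

section

variable {R : Type*} [CommRing R]

theorem Ideal.mem_minimalPrimes_of_mul_mem {I q : Ideal R} [q.IsPrime] (hIq : I ≤ q) {w : R}
    (hw : w ∉ q) (h : ∀ y ∈ q, w * y ∈ I) : q ∈ I.minimalPrimes :=
  ⟨⟨‹_›, hIq⟩, fun _ ⟨hq', hIq'⟩ hle y hy =>
    (hq'.mem_or_mem (hIq' (h y hy))).resolve_left fun hw' => hw (hle hw')⟩

theorem IsIntegrallyClosed.dvd_of_forall_exists_mul_eq [IsDomain R] [IsIntegrallyClosed R]
    {I : Ideal R} (hI : I.FG) (hI0 : I ≠ ⊥) {b d : R} (hd : d ≠ 0)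
    (h : ∀ r ∈ I, ∃ w ∈ I, r * b = d * w) : d ∣ b := by
  have hdK : algebraMap R (FractionRing R) d ≠ 0 :=
    (IsFractionRing.to_map_eq_zero_iff (K := FractionRing R)).not.mpr hd
  have hint : IsIntegral R (algebraMap R (FractionRing R) b / algebraMap R _ d) := by
    refine isIntegral_of_smul_mem_submodule
      (Submodule.map (Algebra.linearMap R (FractionRing R)) I) ?_ (Submodule.FG.map _ hI) _ ?_
    · obtain ⟨r, hr, hr0⟩ := Submodule.exists_mem_ne_zero_of_ne_bot hI0
      exact (Submodule.ne_bot_iff _).mpr ⟨_, Submodule.mem_map_of_mem hr,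
        (IsFractionRing.to_map_eq_zero_iff (K := FractionRing R)).not.mpr hr0⟩
    · rintro _ ⟨r, hr, rfl⟩
      obtain ⟨w, hw, hrw⟩ := h r hr
      refine ⟨w, hw, ?_⟩
      rw [Algebra.linearMap_apply, Algebra.linearMap_apply, smul_eq_mul, div_mul_eq_mul_div,
        eq_div_iff hdK, ← map_mul, ← map_mul, mul_comm b, hrw, mul_comm]
  obtain ⟨a, ha⟩ := IsIntegrallyClosed.algebraMap_eq_of_integral hint
  refine ⟨a, IsFractionRing.injective R (FractionRing R) ?_⟩
  rw [map_mul, ha, mul_div_cancel₀ _ hdK]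

theorem Ideal.Quotient.mem_colon_singleton_mk_iff_dvd (d b r : R) :
    r ∈ (⊥ : Submodule R (R ⧸ Ideal.span {d})).colon {Ideal.Quotient.mk _ b} ↔ d ∣ r * b := by
  rw [Submodule.mem_colon_singleton, Submodule.mem_bot, Algebra.smul_def,
    Ideal.Quotient.algebraMap_eq, ← map_mul, Ideal.Quotient.eq_zero_iff_dvd]

theorem Ideal.height_le_one_of_mem_associatedPrimes_quotient_span_singleton [IsDomain R]
    [IsNoetherianRing R] [IsIntegrallyClosed R] {d : R} (hd : d ≠ 0) {q : Ideal R}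
    (hq : q ∈ associatedPrimes R (R ⧸ Ideal.span {d})) : q.height ≤ 1 := by
  obtain ⟨hqp, x, hqx⟩ := isAssociatedPrime_iff.mp hq
  obtain ⟨b, rfl⟩ := Ideal.Quotient.mk_surjective x
  have hmem (r : R) : r ∈ q ↔ d ∣ r * b :=
    hqx ▸ Ideal.Quotient.mem_colon_singleton_mk_iff_dvd d b r
  have hb : ¬ d ∣ b := fun hb =>
    hqp.ne_top ((Ideal.eq_top_iff_one q).mpr ((hmem 1).mpr (by simpa)))
  by_cases hstable : ∀ r ∈ q, ∃ w ∈ q, r * b = d * w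
  · have hq0 : q ≠ ⊥ := fun h => hd (by simpa [h] using (hmem d).mpr (dvd_mul_right d b))
    exact absurd (IsIntegrallyClosed.dvd_of_forall_exists_mul_eq
      (IsNoetherian.noetherian q) hq0 hd hstable) hb
  push Not at hstable
  obtain ⟨r, hr, hrq⟩ := hstable
  obtain ⟨w, hw⟩ := (hmem r).mp hr
  refine Ideal.height_le_one_of_isPrincipal_of_mem_minimalPrimes (Ideal.span {r}) q
    (Ideal.mem_minimalPrimes_of_mul_mem ((Ideal.span_singleton_le_iff_mem q).mpr hr)
      (fun hwq => hrq w hwq hw) fun y hy => ?_)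
  obtain ⟨v, hv⟩ := (hmem y).mp hy
  refine Ideal.mem_span_singleton'.mpr ⟨v, mul_left_cancel₀ hd ?_⟩
  linear_combination y * hw - r * hv

theorem Ideal.dvd_of_forall_dvd_mul_of_one_lt_height [IsDomain R] [IsNoetherianRing R]
    [IsIntegrallyClosed R] {I : Ideal R} (hI : 1 < I.height) {d b : R} (hd : d ≠ 0)
    (h : ∀ r ∈ I, d ∣ r * b) : d ∣ b := by
  by_contra hb
  obtain ⟨q, hq, hle⟩ := exists_le_isAssociatedPrime_of_isNoetherianRing R
    (Ideal.Quotient.mk (Ideal.span {d}) b) (by rwa [Ne, Ideal.Quotient.eq_zero_iff_dvd])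
  have hIq : I ≤ q := fun r hr =>
    hle ((Ideal.Quotient.mem_colon_singleton_mk_iff_dvd d b r).mpr (h r hr))
  exact (hI.trans_le (Ideal.height_mono hIq)).not_ge
    (Ideal.height_le_one_of_mem_associatedPrimes_quotient_span_singleton hd hq)

theorem Module.IsReflexive.exists_smul_eq_of_forall_dvd [IsDomain R] {M : Type*}
    [AddCommGroup M] [Module R M] [Module.IsReflexive R M] {s : R} (hs : s ≠ 0) {m : M}
    (h : ∀ f : Module.Dual R M, s ∣ f m) : ∃ y : M, s • y = m := by
  choose a ha using h
  let φ : Module.Dual R (Module.Dual R M) :=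
    { toFun := a
      map_add' := fun f g => mul_left_cancel₀ hs (by rw [mul_add, ← ha, ← ha, ← ha]; rfl)
      map_smul' := fun c f => mul_left_cancel₀ hs (by
        rw [← ha, RingHom.id_apply, smul_eq_mul, mul_left_comm, ← ha]; rfl) }
  obtain ⟨y, hy⟩ := (Module.evalEquiv R M).surjective φ
  refine ⟨y, (Module.evalEquiv R M).injective (LinearMap.ext fun f => ?_)⟩
  have hfy : f y = a f := LinearMap.congr_fun hy f
  simp [hfy, ← ha]

theorem Submodule.mem_of_forall_smul_mem_of_one_lt_height [IsDomain R] [IsNoetherianRing R]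
    [IsIntegrallyClosed R] {F : Type*} [AddCommGroup F] [Module R F] [Module.IsTorsionFree R F]
    (F' : Submodule R F) [Module.IsReflexive R F'] {I : Ideal R} (hI : 1 < I.height) {x : F}
    (hx : ∀ r ∈ I, r • x ∈ F') : x ∈ F' := by
  have hI0 : I ≠ ⊥ := by
    rintro rfl
    simp at hI
  obtain ⟨s, hs, hs0⟩ := Submodule.exists_mem_ne_zero_of_ne_bot hI0
  let m : F' := ⟨s • x, hx s hs⟩
  have hdvd (f : Module.Dual R F') : s ∣ f m := by
    refine Ideal.dvd_of_forall_dvd_mul_of_one_lt_height hI hs0 fun r hr =>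
      ⟨f ⟨r • x, hx r hr⟩, ?_⟩
    rw [← smul_eq_mul, ← smul_eq_mul, ← map_smul, ← map_smul]
    congr 1
    ext
    simp [m, smul_smul, mul_comm]
  obtain ⟨y, hy⟩ := Module.IsReflexive.exists_smul_eq_of_forall_dvd hs0 hdvd
  have hyx : (y : F) = x := smul_right_injective F hs0 (congrArg Subtype.val hy)
  exact hyx ▸ y.2

end

theorem torsion_of_quotient_by_reflexive_pure_of_codim_one_general
    {R : Type*} [CommRing R] [IsDomain R] [IsNoetherianRing R]
    [IsIntegrallyClosed R]
    {F : Type*} [AddCommGroup F] [Module R F]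
    (hF : Submodule.torsion R F = ⊥)
    (F' : Submodule R F) (hF' : Module.IsReflexive R F') :
    Submodule.torsion R (F ⧸ F') = ⊥ ∨
      ∀ p (hp : p ∈ associatedPrimes R (Submodule.torsion R (F ⧸ F'))),
        Order.height (⟨p, hp.isPrime⟩ : PrimeSpectrum R) = 1 := by
  have := Submodule.isTorsionFree_iff_torsion_eq_bot.mpr hF
  refine Or.inr fun p hp => ?_
  obtain ⟨hpp, ⟨xq, s, hs⟩, hpx⟩ := isAssociatedPrime_iff.mp hp
  obtain ⟨x, rfl⟩ := Submodule.Quotient.mk_surjective F' xq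
  have hmem (r : R) : r ∈ p ↔ r • x ∈ F' := by
    rw [hpx, Submodule.mem_colon_singleton, Submodule.mem_bot, ← Submodule.coe_eq_zero,
      Submodule.coe_smul, ← Submodule.Quotient.mk_smul, Submodule.Quotient.mk_eq_zero]
  have hxF' : x ∉ F' := fun hx =>
    hpp.ne_top ((Ideal.eq_top_iff_one p).mpr ((hmem 1).mpr (by simpa)))
  have hsp : (s : R) ∈ p := (hmem s).mpr <| by
    rwa [Submonoid.smul_def, ← Submodule.Quotient.mk_smul, Submodule.Quotient.mk_eq_zero] at hs
  have hp0 : p ≠ ⊥ := (Submodule.ne_bot_iff p).mpr ⟨s, hsp, nonZeroDivisors.ne_zero s.2⟩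
  rw [← PrimeSpectrum.height_eq_orderHeight]
  refine le_antisymm (not_lt.mp fun h => hxF' ?_) ?_
  · exact Submodule.mem_of_forall_smul_mem_of_one_lt_height F' h fun r hr => (hmem r).mp hr
  · exact Order.one_le_iff_ne_zero.mpr (Ideal.height_eq_zero_iff_eq_bot.not.mpr hp0)

/-- **Lemma 3.1(2), affine form.**  Let `R` be a commutative Noetherian
integrally closed domain, `F` a finitely generated torsion-free `R`-module and
`F' ⊆ F` a reflexive submodule.  Then either the quotient `F ⧸ F'` is torsion
free, or every associated prime of the torsion submodule of `F ⧸ F'` has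
height `1`. -/
theorem torsion_of_quotient_by_reflexive_pure_of_codim_one
    {R : Type*} [CommRing R] [IsDomain R] [IsNoetherianRing R]
    [IsIntegrallyClosed R]
    {F : Type*} [AddCommGroup F] [Module R F] [Module.Finite R F]
    (hF : Submodule.torsion R F = ⊥)
    (F' : Submodule R F) (hF' : Module.IsReflexive R F') :
    Submodule.torsion R (F ⧸ F') = ⊥ ∨
      ∀ p (hp : p ∈ associatedPrimes R (Submodule.torsion R (F ⧸ F'))),
        Order.height (⟨p, hp.isPrime⟩ : PrimeSpectrum R) = 1 :=
  torsion_of_quotient_by_reflexive_pure_of_codim_one_general hF F' hF'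
end

section
/- Let G be a group acting on topological spaces X and Ω, and let P : X → Ω be a G-equivariant open map. Let W ⊆ X be a nonempty open G-invariant subset. Assume that for every pair of points x, x' ∈ X with P(x) = P(x') there exists g ∈ G such that g • P(x) = P(x) and g • x = x'. If x₀ ∈ X is a point such that the G-orbit of P(x₀) is dense in Ω, then x₀ ∈ W. -/
open MulAction

theorem Dense.exists_map_mem_of_isOpenMap {X Ω : Type*} [TopologicalSpace X]
    [TopologicalSpace Ω] {s : Set Ω} (hs : Dense s) {P : X → Ω} (hP : IsOpenMap P)
    {W : Set X} (hWopen : IsOpen W) (hWne : W.Nonempty) : ∃ w ∈ W, P w ∈ s := by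
  obtain ⟨_, hs, w, hw, rfl⟩ := hs.exists_mem_open (hP W hWopen) (hWne.image P)
  exact ⟨w, hw, hs⟩

theorem mem_orbit_of_map_mem_orbit {G X Ω : Type*} [Group G] [MulAction G X]
    [MulAction G Ω] {P : X → Ω} (hPequiv : ∀ (g : G) (x : X), P (g • x) = g • P x)
    (hfiber : ∀ x x' : X, P x = P x' → ∃ g : G, g • x = x') {x y : X}
    (h : P y ∈ orbit G (P x)) : y ∈ orbit G x := by
  obtain ⟨g, hg⟩ := h
  obtain ⟨k, hk⟩ := hfiber (g • x) y ((hPequiv g x).trans hg)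
  exact ⟨k * g, by simp only [mul_smul, hk]⟩

theorem mem_of_mem_orbit_of_smul_mem {G X : Type*} [Group G] [MulAction G X] {W : Set X}
    (hWinv : ∀ (g : G), ∀ w ∈ W, g • w ∈ W) {x y : X} (hy : y ∈ orbit G x) (hyW : y ∈ W) :
    x ∈ W := by
  obtain ⟨g, rfl⟩ := hy
  simpa using hWinv g⁻¹ _ hyW

/-- **Abstract form of Lemma 2.1.**  Let `P : X → Ω` be a `G`-equivariant open
map between topological `G`-spaces such that the stabilizer of `P x` acts
transitively on the fiber of `P` through `x`, for every `x`.  If `W ⊆ X` is a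
nonempty open `G`-invariant subset and `x₀` is a point such that the `G`-orbit
of `P x₀` is dense in `Ω`, then `x₀ ∈ W`. -/
theorem mem_invariant_open_of_dense_orbit_of_period_map
    {G X Ω : Type*} [Group G] [MulAction G X] [MulAction G Ω]
    [TopologicalSpace X] [TopologicalSpace Ω]
    (P : X → Ω) (hPequiv : ∀ (g : G) (x : X), P (g • x) = g • P x)
    (hPopen : IsOpenMap P)
    (W : Set X) (hWopen : IsOpen W) (hWne : W.Nonempty)
    (hWinv : ∀ (g : G), ∀ w ∈ W, g • w ∈ W)
    (htrans : ∀ x x' : X, P x = P x' →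
      ∃ g : G, g • P x = P x ∧ g • x = x')
    (x₀ : X) (hx₀ : Dense (MulAction.orbit G (P x₀) : Set Ω)) :
    x₀ ∈ W := by
  obtain ⟨w, hwW, hw⟩ := hx₀.exists_map_mem_of_isOpenMap hPopen hWopen hWne
  have hfiber : ∀ x x' : X, P x = P x' → ∃ g : G, g • x = x' :=
    fun x x' hxx' => (htrans x x' hxx').imp fun _ => And.right
  exact mem_of_mem_orbit_of_smul_mem hWinv (mem_orbit_of_map_mem_orbit hPequiv hfiber hw) hwW
end
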